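/- arXiv:1706.08490 — 5 statements merged into one kernel-verified Lean document; each statement's English description precedes it below -/
import Mathlib

section
/- For every α ∈ (0, 1/2) and every μ > 0, the wave speed c*(α, μ) = (1 − 2α)/√(μ + (α − α²)(μ − 1)²) satisfies 0 < c*(α, μ) < √(1/μ); equivalently, μ·c*(α, μ)² < 1. (The proof reduces to the identity μ(1 − 2α)² + 4μ(α − α²) + (α − α²)(μ − 1)² − μ − (α − α²)(μ − 1)² = −(α − α²)(μ + 1)² < 0, i.e. to (α − α²)(μ + 1)² > 0.) -/
/-!
Writing `p = α - α²`, one has `(1 - 2α)² = 1 - 4p`, so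
`μ + p(μ - 1)² - μ(1 - 2α)² = p(μ + 1)²`, which is positive for `0 < α < 1`.
Hence `μ c*² < 1`, and taking square roots gives `c* < √(1/μ)`.
-/

theorem mul_sq_one_sub_two_mul_lt {α μ : ℝ} (hp : 0 < α - α ^ 2) (hμ : μ ≠ -1) :
    μ * (1 - 2 * α) ^ 2 < μ + (α - α ^ 2) * (μ - 1) ^ 2 := by
  have hgap : μ + (α - α ^ 2) * (μ - 1) ^ 2 - μ * (1 - 2 * α) ^ 2
      = (α - α ^ 2) * (μ + 1) ^ 2 := by ring
  have hsq : 0 < (μ + 1) ^ 2 := sq_pos_of_ne_zero (by contrapose! hμ; linarith)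
  linarith [mul_pos hp hsq]

theorem lt_sqrt_one_div_of_mul_sq_lt_one {c μ : ℝ} (hc : 0 ≤ c) (hμ : 0 < μ)
    (h : μ * c ^ 2 < 1) : c < √(1 / μ) := by
  rw [Real.lt_sqrt hc, lt_div_iff₀ hμ, mul_comm]
  exact h

/-- For every `α ∈ (0, 1/2)` and every `μ > 0`, the wave speed
`c*(α, μ) = (1 − 2α)/√(μ + (α − α²)(μ − 1)²)` satisfies `0 < c* < √(1/μ)`;
equivalently `μ·(c*)² < 1`. -/
theorem mckean_wave_speed_subcharacteristic (α μ : ℝ)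
    (hα : α ∈ Set.Ioo (0 : ℝ) (1 / 2)) (hμ : 0 < μ) :
    let c : ℝ := (1 - 2 * α) / Real.sqrt (μ + (α - α ^ 2) * (μ - 1) ^ 2)
    0 < c ∧ c < Real.sqrt (1 / μ) ∧ μ * c ^ 2 < 1 := by
  intro c
  obtain ⟨hα₀, hα₁⟩ := hα
  have hp : 0 < α - α ^ 2 := by nlinarith
  have hD : 0 < μ + (α - α ^ 2) * (μ - 1) ^ 2 := by positivity
  have hc : 0 < c := div_pos (by linarith) (Real.sqrt_pos.mpr hD)
  have hμc : μ * c ^ 2 < 1 := by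
    rw [div_pow, Real.sq_sqrt hD.le, mul_div_assoc', div_lt_one hD]
    exact mul_sq_one_sub_two_mul_lt hp (by linarith)
  exact ⟨hc, lt_sqrt_one_div_of_mul_sq_lt_one hc.le hμ hμc, hμc⟩
end

section
/- Fix α ∈ (0, 1/2) and μ > 0, and set γ(c) = c²μ − 1, β(c) = −c(1 + μ). Then c = (1 − 2α)/√(μ + (α − α²)(μ − 1)²) is the unique positive real number satisfying the C¹-matching condition γ(c)/β(c)² = (α² − α)/(2α − 1)². In particular μ + (α − α²)(μ − 1)² > 0, so the formula is well defined. -/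
/-! Clearing denominators, the matching condition becomes linear in `c²`:
`c² (μ (1 - 2α)² + (α - α²)(1 + μ)²) = (1 - 2α)²`, and the coefficient of `c²` simplifies to
`μ + (α - α²)(μ - 1)²`, which is positive. A positive `c` is then determined by `c²`. -/

lemma sq_mul_eq_sq_iff_eq_div_sqrt {c k D : ℝ} (hc : 0 ≤ c) (hk : 0 ≤ k) (hD : 0 < D) :
    c ^ 2 * D = k ^ 2 ↔ c = k / √D := by
  have hsD : 0 < √D := Real.sqrt_pos.mpr hD
  rw [eq_div_iff hsD.ne', ← sq_eq_sq₀ (mul_nonneg hc hsD.le) hk, mul_pow, Real.sq_sqrt hD.le]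

lemma mckean_denom_pos {α μ : ℝ} (hα₀ : 0 < α) (hα₁ : α < 1) (hμ : 0 < μ) :
    0 < μ + (α - α ^ 2) * (μ - 1) ^ 2 := by
  have : 0 < α - α ^ 2 := by nlinarith
  positivity

lemma mckean_matching_iff {α μ c : ℝ} (hc : c ≠ 0) (hμ : 1 + μ ≠ 0) (hα : 2 * α - 1 ≠ 0) :
    (c ^ 2 * μ - 1) / (-c * (1 + μ)) ^ 2 = (α ^ 2 - α) / (2 * α - 1) ^ 2 ↔
      c ^ 2 * (μ + (α - α ^ 2) * (μ - 1) ^ 2) = (1 - 2 * α) ^ 2 := by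
  rw [div_eq_div_iff (pow_ne_zero 2 (mul_ne_zero (neg_ne_zero.mpr hc) hμ)) (pow_ne_zero 2 hα)]
  constructor <;> intro h <;> linear_combination h

/-- For `α ∈ (0, 1/2)` and `μ > 0`, with `γ(c) = c²μ − 1` and
`β(c) = −c(1+μ)`, the number `c = (1 − 2α)/√(μ + (α − α²)(μ − 1)²)` is the unique
positive real satisfying the C¹-matching condition `γ(c)/β(c)² = (α² − α)/(2α − 1)²`;
in particular `μ + (α − α²)(μ − 1)² > 0`, so the formula is well defined. -/
theorem mckean_wave_speed_unique (α μ : ℝ)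
    (hα : α ∈ Set.Ioo (0 : ℝ) (1 / 2)) (hμ : 0 < μ) :
    0 < μ + (α - α ^ 2) * (μ - 1) ^ 2 ∧
    (let c₀ : ℝ := (1 - 2 * α) / Real.sqrt (μ + (α - α ^ 2) * (μ - 1) ^ 2)
     0 < c₀ ∧
     (c₀ ^ 2 * μ - 1) / (-c₀ * (1 + μ)) ^ 2 = (α ^ 2 - α) / (2 * α - 1) ^ 2 ∧
     ∀ c : ℝ, 0 < c →
       (c ^ 2 * μ - 1) / (-c * (1 + μ)) ^ 2 = (α ^ 2 - α) / (2 * α - 1) ^ 2 →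
       c = c₀) := by
  obtain ⟨hα₀, hα₁⟩ := hα
  have hD := mckean_denom_pos hα₀ (by linarith) hμ
  have hk : 0 < 1 - 2 * α := by linarith
  have hμ' : 1 + μ ≠ 0 := by positivity
  have hα' : 2 * α - 1 ≠ 0 := by linarith
  have hc₀ : 0 < (1 - 2 * α) / √(μ + (α - α ^ 2) * (μ - 1) ^ 2) :=
    div_pos hk (Real.sqrt_pos.mpr hD)
  refine ⟨hD, hc₀, ?_, fun c hc h => ?_⟩
  · rw [mckean_matching_iff hc₀.ne' hμ' hα', sq_mul_eq_sq_iff_eq_div_sqrt hc₀.le hk.le hD]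
  · rwa [mckean_matching_iff hc.ne' hμ' hα', sq_mul_eq_sq_iff_eq_div_sqrt hc.le hk.le hD] at h
end

section
/- Fix α ∈ (0, 1/2) and μ > 0, let c = (1 − 2α)/√(μ + (α − α²)(μ − 1)²), set γ = c²μ − 1 and β = −c(1 + μ), and let λ₊ < 0 < λ₋ be the roots of γλ² + βλ + 1 = 0. Define U(z) = α·exp(λ₊ z) for z > 0 and U(z) = (α − 1)·exp(λ₋ z) + 1 for z ≤ 0. Then U is continuously differentiable on all of ℝ (in particular the one-sided derivatives at 0 agree: αλ₊ = (α − 1)λ₋), and for every z ≠ 0, U is twice differentiable at z and satisfies the nonlinear traveling-wave equation (c²μ − 1)U''(z) − c(1 + μ)U'(z) + U(z) = H(U(z) − α), where H(x) = 1 for x ≥ 0 and H(x) = 0 for x < 0. -/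
/-!
On each half-line the profile is a single exponential mode `A exp(λz) + B` with `λ` a root of
`γλ² + βλ + 1 = 0`, so it solves the linear equation with right-hand side `B`; and `H(U − α)`
equals that `B` because `U < α` for `z > 0` and `U > α` for `z < 0`. The two modes agree at
`0`, and their slopes agree because `c` is exactly the speed for which
`αλ₊ + (1 − α)λ₋ = 0`: by Vieta,
`γ² (αλ₊ + (1 − α)λ₋)((α − 1)λ₊ − αλ₋) = −α(1 − α)c²(1 + μ)² − (1 − 2α)²γ`,
which vanishes when `c²(μ + (α − α²)(μ − 1)²) = (1 − 2α)²`, and the second factor cannot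
vanish since `λ₊ + λ₋ = c(1 + μ)/γ < 0`.
-/

open Real Filter Topology Set

section Gluing

variable {F : Type*} {f g : ℝ → F} {a z : ℝ}

lemma ite_lt_eventuallyEq_of_lt (hz : a < z) :
    (fun x => if a < x then f x else g x) =ᶠ[𝓝 z] f :=
  eventually_of_mem (Ioi_mem_nhds hz) fun _ hx => if_pos hx

lemma ite_lt_eventuallyEq_of_gt (hz : z < a) :
    (fun x => if a < x then f x else g x) =ᶠ[𝓝 z] g :=
  eventually_of_mem (Iio_mem_nhds hz) fun _ hx => if_neg (not_lt.2 (le_of_lt hx))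

variable [NormedAddCommGroup F] [NormedSpace ℝ F]

lemma hasDerivAt_ite_lt {f' g' : ℝ → F} (hf : ∀ x, HasDerivAt f (f' x) x)
    (hg : ∀ x, HasDerivAt g (g' x) x) (h₀ : f a = g a) (h₁ : f' a = g' a) (z : ℝ) :
    HasDerivAt (fun x => if a < x then f x else g x) (if a < z then f' z else g' z) z := by
  rcases lt_trichotomy z a with hz | rfl | hz
  · rw [if_neg hz.not_gt]
    exact (hg z).congr_of_eventuallyEq (ite_lt_eventuallyEq_of_gt hz)
  · rw [if_neg (lt_irrefl z)]
    have hleft : HasDerivWithinAt (fun x => if z < x then f x else g x) (g' z) (Iic z) z :=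
      (hg z).hasDerivWithinAt.congr (fun _ hx => if_neg (not_lt.2 hx)) (if_neg (lt_irrefl z))
    have hright : HasDerivWithinAt (fun x => if z < x then f x else g x) (g' z) (Ici z) z := by
      rw [← hasDerivWithinAt_Ioi_iff_Ici, ← h₁]
      exact (hf z).hasDerivWithinAt.congr (fun _ hx => if_pos hx)
        ((if_neg (lt_irrefl z)).trans h₀.symm)
    simpa only [Iic_union_Ici, hasDerivWithinAt_univ] using hleft.union hright
  · rw [if_pos hz]
    exact (hf z).congr_of_eventuallyEq (ite_lt_eventuallyEq_of_lt hz)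

lemma contDiff_one_ite_lt (hf : ContDiff ℝ 1 f) (hg : ContDiff ℝ 1 g) (h₀ : f a = g a)
    (h₁ : deriv f a = deriv g a) :
    ContDiff ℝ 1 (fun x => if a < x then f x else g x) := by
  have hderiv := hasDerivAt_ite_lt (fun x => (hf.differentiable one_ne_zero x).hasDerivAt)
    (fun x => (hg.differentiable one_ne_zero x).hasDerivAt) h₀ h₁
  refine contDiff_one_iff_deriv.2 ⟨fun x => (hderiv x).differentiableAt, ?_⟩
  rw [funext fun x => (hderiv x).deriv]
  simp only [← not_le, ite_not]
  exact (hg.continuous_deriv le_rfl).if_le (hf.continuous_deriv le_rfl) continuous_id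
    continuous_const fun x hx => hx ▸ h₁.symm

end Gluing

section ExponentialMode

lemma hasDerivAt_mul_exp_mul_add (A l B z : ℝ) :
    HasDerivAt (fun y => A * exp (l * y) + B) (A * l * exp (l * z)) z := by
  have h := (((hasDerivAt_id z).const_mul l).exp.const_mul A).add_const B
  simp only [id_eq, mul_one] at h
  exact h.congr_deriv (by ring)

lemma deriv_mul_exp_mul_add (A l B : ℝ) :
    deriv (fun y => A * exp (l * y) + B) = fun z => A * l * exp (l * z) + 0 :=
  funext fun z => by rw [(hasDerivAt_mul_exp_mul_add A l B z).deriv, add_zero]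

lemma linear_ode_of_eventuallyEq_exp {V : ℝ → ℝ} {γ β l A B z : ℝ}
    (hl : γ * l ^ 2 + β * l + 1 = 0) (hV : V =ᶠ[𝓝 z] fun y => A * exp (l * y) + B) :
    DifferentiableAt ℝ (deriv V) z ∧ γ * deriv (deriv V) z + β * deriv V z + V z = B := by
  have hV' : deriv V =ᶠ[𝓝 z] fun y => A * l * exp (l * y) + 0 :=
    deriv_mul_exp_mul_add A l B ▸ hV.deriv
  have hV'' := hasDerivAt_mul_exp_mul_add (A * l) l 0 z
  refine ⟨hV''.differentiableAt.congr_of_eventuallyEq hV', ?_⟩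
  rw [hV'.deriv_eq, hV''.deriv, hV'.eq_of_nhds, hV.eq_of_nhds]
  linear_combination (A * exp (l * z)) * hl

end ExponentialMode

section Speed

lemma vieta_of_quadratic_roots {γ β x y : ℝ} (hxy : x ≠ y) (hx : γ * x ^ 2 + β * x + 1 = 0)
    (hy : γ * y ^ 2 + β * y + 1 = 0) : γ * (x + y) = -β ∧ γ * (x * y) = 1 := by
  have hsub : x - y ≠ 0 := sub_ne_zero.2 hxy
  exact ⟨mul_left_cancel₀ hsub (by linear_combination hx - hy),
    mul_left_cancel₀ hsub (by linear_combination y * hx - x * hy)⟩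

lemma mckean_radicand_pos {α μ : ℝ} (hα₀ : 0 ≤ α) (hα₁ : α ≤ 1) (hμ : 0 < μ) :
    0 < μ + (α - α ^ 2) * (μ - 1) ^ 2 := by
  have : 0 ≤ α - α ^ 2 := by nlinarith
  positivity

lemma mckean_slope_factors_eq_zero {α μ c x y : ℝ}
    (hc : c ^ 2 * (μ + (α - α ^ 2) * (μ - 1) ^ 2) = (1 - 2 * α) ^ 2) (hxy : x ≠ y)
    (hx : (c ^ 2 * μ - 1) * x ^ 2 + (-c * (1 + μ)) * x + 1 = 0)
    (hy : (c ^ 2 * μ - 1) * y ^ 2 + (-c * (1 + μ)) * y + 1 = 0) :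
    (α * x + (1 - α) * y) * ((α - 1) * x - α * y) = 0 := by
  obtain ⟨hsum, hprod⟩ := vieta_of_quadratic_roots hxy hx hy
  have hγ : c ^ 2 * μ - 1 ≠ 0 := left_ne_zero_of_mul_eq_one hprod
  refine (mul_eq_zero.1 ?_).resolve_left (pow_ne_zero 2 hγ)
  linear_combination (-(α * (1 - α)) * ((c ^ 2 * μ - 1) * (x + y) + c * (1 + μ))) * hsum
    - (1 - 2 * α) ^ 2 * (c ^ 2 * μ - 1) * hprod - hc

lemma mckean_slopes_match {α μ c x y : ℝ} (hα₀ : 0 < α) (hα₂ : α < 1 / 2) (hμ : 0 < 1 + μ)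
    (hc₀ : 0 < c) (hc : c ^ 2 * (μ + (α - α ^ 2) * (μ - 1) ^ 2) = (1 - 2 * α) ^ 2)
    (hx : (c ^ 2 * μ - 1) * x ^ 2 + (-c * (1 + μ)) * x + 1 = 0)
    (hy : (c ^ 2 * μ - 1) * y ^ 2 + (-c * (1 + μ)) * y + 1 = 0) (hx₀ : x < 0) (hy₀ : 0 < y) :
    α * x = (α - 1) * y := by
  have hxy : x ≠ y := (hx₀.trans hy₀).ne
  obtain ⟨hsum, hprod⟩ := vieta_of_quadratic_roots hxy hx hy
  have hγ : c ^ 2 * μ - 1 < 0 := by nlinarith [mul_neg_of_neg_of_pos hx₀ hy₀]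
  have hsum_neg : x + y < 0 := by nlinarith [mul_pos hc₀ hμ]
  rcases mul_eq_zero.1 (mckean_slope_factors_eq_zero hc hxy hx hy) with h | h
  · linarith
  · nlinarith [mul_neg_of_pos_of_neg hα₀ hsum_neg]

end Speed

/-- For `α ∈ (0, 1/2)`, `μ > 0`, `c = (1 − 2α)/√(μ + (α − α²)(μ − 1)²)`,
`γ = c²μ − 1`, `β = −c(1+μ)`, and `λ₊ < 0 < λ₋` the roots of `γλ² + βλ + 1 = 0`, the
profile `U(z) = α·exp(λ₊ z)` for `z > 0`, `U(z) = (α − 1)·exp(λ₋ z) + 1` for `z ≤ 0`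
is C¹ on ℝ (in particular `αλ₊ = (α − 1)λ₋`), and for every `z ≠ 0` it is twice
differentiable at `z` and satisfies
`(c²μ − 1)U''(z) − c(1 + μ)U'(z) + U(z) = H(U(z) − α)`, where `H(x) = 1` for `x ≥ 0`
and `H(x) = 0` for `x < 0`. -/
theorem mckean_front_solves_travelling_wave_eq (α μ : ℝ)
    (hα : α ∈ Set.Ioo (0 : ℝ) (1 / 2)) (hμ : 0 < μ)
    (c : ℝ) (hc : c = (1 - 2 * α) / Real.sqrt (μ + (α - α ^ 2) * (μ - 1) ^ 2))
    (lp lm : ℝ)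
    (hp : (c ^ 2 * μ - 1) * lp ^ 2 + (-c * (1 + μ)) * lp + 1 = 0)
    (hm : (c ^ 2 * μ - 1) * lm ^ 2 + (-c * (1 + μ)) * lm + 1 = 0)
    (hlp : lp < 0) (hlm : 0 < lm)
    (U : ℝ → ℝ)
    (hU : ∀ z : ℝ, U z =
      if 0 < z then α * Real.exp (lp * z) else (α - 1) * Real.exp (lm * z) + 1) :
    ContDiff ℝ 1 U ∧
    α * lp = (α - 1) * lm ∧
    ∀ z : ℝ, z ≠ 0 →
      DifferentiableAt ℝ (deriv U) z ∧
      (c ^ 2 * μ - 1) * deriv (deriv U) z - c * (1 + μ) * deriv U z + U z =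
        (if 0 ≤ U z - α then (1 : ℝ) else 0) := by
  obtain ⟨hα₀, hα₂⟩ := hα
  have hK := mckean_radicand_pos hα₀.le (by linarith) hμ
  have hc₀ : 0 < c := hc ▸ div_pos (by linarith) (sqrt_pos.2 hK)
  have hcK : c ^ 2 * (μ + (α - α ^ 2) * (μ - 1) ^ 2) = (1 - 2 * α) ^ 2 := by
    rw [hc, div_pow, sq_sqrt hK.le, div_mul_cancel₀ _ hK.ne']
  have hmatch := mckean_slopes_match hα₀ hα₂ (by linarith) hc₀ hcK hp hm hlp hlm
  have hU' : U = fun z => if 0 < z then α * exp (lp * z) + 0 else (α - 1) * exp (lm * z) + 1 :=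
    funext fun z => by rw [hU, add_zero]
  have hC1 : ContDiff ℝ 1 U := hU' ▸ contDiff_one_ite_lt (by fun_prop) (by fun_prop) (by simp)
    (by rw [deriv_mul_exp_mul_add, deriv_mul_exp_mul_add]; simpa using hmatch)
  refine ⟨hC1, hmatch, fun z hz => ?_⟩
  rcases hz.lt_or_gt with hneg | hpos
  · have hUz : U =ᶠ[𝓝 z] _ := hU' ▸ ite_lt_eventuallyEq_of_gt hneg
    obtain ⟨hd, hode⟩ := linear_ode_of_eventuallyEq_exp hm hUz
    have hexp : exp (lm * z) < 1 := exp_lt_one_iff.2 (mul_neg_of_pos_of_neg hlm hneg)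
    refine ⟨hd, ?_⟩
    rw [hUz.eq_of_nhds] at hode ⊢
    rw [if_pos (by nlinarith)]
    linear_combination hode
  · have hUz : U =ᶠ[𝓝 z] _ := hU' ▸ ite_lt_eventuallyEq_of_lt hpos
    obtain ⟨hd, hode⟩ := linear_ode_of_eventuallyEq_exp hp hUz
    have hexp : exp (lp * z) < 1 := exp_lt_one_iff.2 (mul_neg_of_neg_of_pos hlp hpos)
    refine ⟨hd, ?_⟩
    rw [hUz.eq_of_nhds] at hode ⊢
    rw [if_neg (by nlinarith)]
    linear_combination hode
end

section
/- Let σ, k, χ, C_m, τ be positive reals, let α ∈ (0, 1/2), and set μ = τk/C_m. Then the dimensional front speed v = √(σk/(χC_m²)) · (1 − 2α)/√(μ + (α − α²)(μ − 1)²) satisfies 0 < v < √(σ/(χτC_m)). -/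
/-!
Writing `μ = τk/C_m`, the dimensional speed factors as `v = √(σ/(χτC_m)) · √μ · c*(α, μ)`,
so the upper bound is `√μ · c* < 1`. This follows from the identity
`μ + (α − α²)(μ − 1)² − μ(1 − 2α)² = (α − α²)(μ + 1)²`, whose right side is positive for `α ∈ (0, 1)`.
-/

open Real

noncomputable def mckeanFrontSpeed (α μ : ℝ) : ℝ :=
  (1 - 2 * α) / √(μ + (α - α ^ 2) * (μ - 1) ^ 2)

section McKean

variable {α μ : ℝ}

lemma mckeanFrontSpeed_denom_sub (α μ : ℝ) :
    μ + (α - α ^ 2) * (μ - 1) ^ 2 - μ * (1 - 2 * α) ^ 2 = (α - α ^ 2) * (μ + 1) ^ 2 := by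
  ring

lemma mckeanFrontSpeed_denom_pos (hα0 : 0 ≤ α) (hα1 : α ≤ 1) (hμ : 0 < μ) :
    0 < μ + (α - α ^ 2) * (μ - 1) ^ 2 := by
  have : 0 ≤ α - α ^ 2 := by nlinarith
  positivity

lemma mckeanFrontSpeed_pos (hα0 : 0 ≤ α) (hα : α < 1 / 2) (hμ : 0 < μ) :
    0 < mckeanFrontSpeed α μ :=
  div_pos (by linarith) (sqrt_pos.2 (mckeanFrontSpeed_denom_pos hα0 (by linarith) hμ))

lemma sqrt_mul_mckeanFrontSpeed_lt_one (hα0 : 0 < α) (hα1 : α < 1) (hμ : 0 < μ) :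
    √μ * mckeanFrontSpeed α μ < 1 := by
  have hD := mckeanFrontSpeed_denom_pos hα0.le hα1.le hμ
  have hsq : (√μ * mckeanFrontSpeed α μ) ^ 2 < 1 := by
    rw [mckeanFrontSpeed, mul_pow, div_pow, sq_sqrt hμ.le, sq_sqrt hD.le, ← mul_div_assoc,
      div_lt_one hD, ← sub_pos, mckeanFrontSpeed_denom_sub]
    have : 0 < α - α ^ 2 := by nlinarith
    positivity
  exact (le_abs_self _).trans_lt (sq_lt_one_iff_abs_lt_one _ |>.1 hsq)

end McKean

lemma sqrt_reaction_scale_eq {σ k χ Cm τ : ℝ} (hτ : τ ≠ 0) (hCm : Cm ≠ 0)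
    (hμ : 0 ≤ τ * k / Cm) :
    √(σ * k / (χ * Cm ^ 2)) = √(σ / (χ * τ * Cm)) * √(τ * k / Cm) := by
  rw [← sqrt_mul' _ hμ]
  congr 1
  field_simp

/-- For positive `σ, k, χ, C_m, τ` and `α ∈ (0, 1/2)`, with
`μ = τk/C_m`, the dimensional front speed
`v = √(σk/(χC_m²))·(1 − 2α)/√(μ + (α − α²)(μ − 1)²)` satisfies
`0 < v < √(σ/(χτC_m))`. -/
theorem dimensional_front_speed_bound (σ k χ Cm τ α : ℝ)
    (hσ : 0 < σ) (hk : 0 < k) (hχ : 0 < χ) (hCm : 0 < Cm) (hτ : 0 < τ)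
    (hα : α ∈ Set.Ioo (0 : ℝ) (1 / 2)) :
    let μ : ℝ := τ * k / Cm
    let v : ℝ := Real.sqrt (σ * k / (χ * Cm ^ 2)) *
      ((1 - 2 * α) / Real.sqrt (μ + (α - α ^ 2) * (μ - 1) ^ 2))
    0 < v ∧ v < Real.sqrt (σ / (χ * τ * Cm)) := by
  obtain ⟨hα0, hα2⟩ := hα
  intro μ v
  have hμ : 0 < μ := by positivity
  have hc : 0 < mckeanFrontSpeed α μ := mckeanFrontSpeed_pos hα0.le hα2 hμ
  have hscale : 0 < √(σ / (χ * τ * Cm)) := by positivity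
  have hv : v = √(σ / (χ * τ * Cm)) * (√μ * mckeanFrontSpeed α μ) := by
    rw [← mul_assoc, ← sqrt_reaction_scale_eq hτ.ne' hCm.ne' hμ.le]
    rfl
  rw [hv]
  refine ⟨mul_pos hscale (mul_pos (sqrt_pos.2 hμ) hc), ?_⟩
  calc √(σ / (χ * τ * Cm)) * (√μ * mckeanFrontSpeed α μ)
      < √(σ / (χ * τ * Cm)) * 1 :=
        mul_lt_mul_of_pos_left (sqrt_mul_mckeanFrontSpeed_lt_one hα0 (by linarith) hμ) hscale
    _ = √(σ / (χ * τ * Cm)) := mul_one _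
end

section
/- Let L_e, L_i, R_e, R_i, χ, C_m be real constants with χ ≠ 0 and R_i + R_e ≠ 0, and let V_e, V_i, I_e, I_i, I_ion : ℝ × ℝ → ℝ be twice continuously differentiable functions of (x, t) satisfying: ∂ₓV_e = −L_e∂ₜI_e − R_e I_e, ∂ₓV_i = −L_i∂ₜI_i − R_i I_i, and ∂ₓI_e = −∂ₓI_i = I_t, where I_t = χ(C_m∂ₜV + I_ion) and V = V_i − V_e. Then V satisfies the hyperbolic cable equation τC_m∂ₜₜV + C_m∂ₜV − D·∂ₓₓV = −I_ion − τ∂ₜI_ion, with conductivity D = 1/(χ(R_i + R_e)) and relaxation time τ = (L_i + L_e)/(R_i + R_e). -/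
/-- The partial derivative in the first (space) variable. -/
noncomputable def pdx (f : ℝ → ℝ → ℝ) (x t : ℝ) : ℝ := deriv (fun y => f y t) x

/-- The partial derivative in the second (time) variable. -/
noncomputable def pdt (f : ℝ → ℝ → ℝ) (x t : ℝ) : ℝ := deriv (fun s => f x s) t

/-!
Subtracting the two Ohm laws expresses `∂ₓV` through the currents. Differentiating once more,
commuting `∂ₓ∂ₜ = ∂ₜ∂ₓ` on the `C²` currents (Schwarz) and using Kirchhoff's laws gives
`∂ₓₓV = (L_i + L_e) ∂ₜI_t + (R_i + R_e) I_t`. Substituting `I_t = χ (C_m ∂ₜV + I_ion)` and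
dividing by `χ (R_i + R_e)` yields the hyperbolic cable equation.
-/

open Function

section PartialDerivatives

variable {f g : ℝ → ℝ → ℝ} {x t : ℝ}

theorem hasDerivAt_fderiv_uncurry_fst (hf : DifferentiableAt ℝ (uncurry f) (x, t)) :
    HasDerivAt (fun y => f y t) (fderiv ℝ (uncurry f) (x, t) (1, 0)) x :=
  hf.hasFDerivAt.comp_hasDerivAt (f := fun y => (y, t)) x
    ((hasDerivAt_id x).prodMk (hasDerivAt_const x t))

theorem hasDerivAt_fderiv_uncurry_snd (hf : DifferentiableAt ℝ (uncurry f) (x, t)) :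
    HasDerivAt (fun s => f x s) (fderiv ℝ (uncurry f) (x, t) (0, 1)) t :=
  hf.hasFDerivAt.comp_hasDerivAt (f := fun s => (x, s)) t
    ((hasDerivAt_const t x).prodMk (hasDerivAt_id t))

theorem pdx_eq_fderiv (hf : DifferentiableAt ℝ (uncurry f) (x, t)) :
    pdx f x t = fderiv ℝ (uncurry f) (x, t) (1, 0) :=
  (hasDerivAt_fderiv_uncurry_fst hf).deriv

theorem pdt_eq_fderiv (hf : DifferentiableAt ℝ (uncurry f) (x, t)) :
    pdt f x t = fderiv ℝ (uncurry f) (x, t) (0, 1) :=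
  (hasDerivAt_fderiv_uncurry_snd hf).deriv

theorem hasDerivAt_pdx (hf : DifferentiableAt ℝ (uncurry f) (x, t)) :
    HasDerivAt (fun y => f y t) (pdx f x t) x :=
  pdx_eq_fderiv hf ▸ hasDerivAt_fderiv_uncurry_fst hf

theorem hasDerivAt_pdt (hf : DifferentiableAt ℝ (uncurry f) (x, t)) :
    HasDerivAt (fun s => f x s) (pdt f x t) t :=
  pdt_eq_fderiv hf ▸ hasDerivAt_fderiv_uncurry_snd hf

theorem pdx_sub (hf : DifferentiableAt ℝ (uncurry f) (x, t))
    (hg : DifferentiableAt ℝ (uncurry g) (x, t)) :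
    pdx (f - g) x t = pdx f x t - pdx g x t :=
  ((hasDerivAt_pdx hf).sub (hasDerivAt_pdx hg)).deriv

theorem pdt_neg : pdt (-f) x t = -pdt f x t :=
  deriv.fun_neg

theorem uncurry_pdx_eq_fderiv (hf : Differentiable ℝ (uncurry f)) :
    uncurry (pdx f) = fun p => fderiv ℝ (uncurry f) p (1, 0) :=
  funext fun p => pdx_eq_fderiv (hf p)

theorem uncurry_pdt_eq_fderiv (hf : Differentiable ℝ (uncurry f)) :
    uncurry (pdt f) = fun p => fderiv ℝ (uncurry f) p (0, 1) :=
  funext fun p => pdt_eq_fderiv (hf p)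

theorem ContDiff.uncurry_pdx {n : WithTop ℕ∞} (hf : ContDiff ℝ (n + 1) (uncurry f)) :
    ContDiff ℝ n (uncurry (pdx f)) := by
  rw [uncurry_pdx_eq_fderiv (hf.differentiable (by simp))]
  exact (hf.fderiv_right le_rfl).clm_apply contDiff_const

theorem ContDiff.uncurry_pdt {n : WithTop ℕ∞} (hf : ContDiff ℝ (n + 1) (uncurry f)) :
    ContDiff ℝ n (uncurry (pdt f)) := by
  rw [uncurry_pdt_eq_fderiv (hf.differentiable (by simp))]
  exact (hf.fderiv_right le_rfl).clm_apply contDiff_const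

theorem pdx_pdt_comm (hf : ContDiff ℝ 2 (uncurry f)) (x t : ℝ) :
    pdx (pdt f) x t = pdt (pdx f) x t := by
  have hf' : Differentiable ℝ (uncurry f) := hf.differentiable (by simp)
  have hD : Differentiable ℝ (fderiv ℝ (uncurry f)) :=
    (hf.fderiv_right (m := 1) le_rfl).differentiable (by simp)
  rw [pdx_eq_fderiv ((hf.uncurry_pdt (n := 1)).differentiable (by simp) _),
    pdt_eq_fderiv ((hf.uncurry_pdx (n := 1)).differentiable (by simp) _),
    uncurry_pdt_eq_fderiv hf', uncurry_pdx_eq_fderiv hf',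
    fderiv_clm_apply (hD _) (differentiableAt_const _),
    fderiv_clm_apply (hD _) (differentiableAt_const _)]
  simpa using (hf.contDiffAt (x := (x, t))).isSymmSndFDerivAt (by simp) (1, 0) (0, 1)

end PartialDerivatives

/-- In the one-dimensional cable model with axial inductances, if the
C² potentials and currents satisfy `∂ₓV_e = −L_e∂ₜI_e − R_e I_e`,
`∂ₓV_i = −L_i∂ₜI_i − R_i I_i`, and `∂ₓI_e = −∂ₓI_i = I_t` with
`I_t = χ(C_m∂ₜV + I_ion)`, `V = V_i − V_e`, then `V` satisfies the hyperbolic cable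
equation `τC_m∂ₜₜV + C_m∂ₜV − D∂ₓₓV = −I_ion − τ∂ₜI_ion`, with
`D = 1/(χ(R_i + R_e))` and `τ = (L_i + L_e)/(R_i + R_e)`. -/
theorem hyperbolic_cable_equation (Le Li Re Ri χ Cm : ℝ)
    (hχ : χ ≠ 0) (hR : Ri + Re ≠ 0)
    (Ve Vi Ie Ii Iion : ℝ → ℝ → ℝ)
    (hVe : ContDiff ℝ 2 (Function.uncurry Ve))
    (hVi : ContDiff ℝ 2 (Function.uncurry Vi))
    (hIe : ContDiff ℝ 2 (Function.uncurry Ie))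
    (hIi : ContDiff ℝ 2 (Function.uncurry Ii))
    (hIion : ContDiff ℝ 2 (Function.uncurry Iion))
    (V : ℝ → ℝ → ℝ) (hV : ∀ x t : ℝ, V x t = Vi x t - Ve x t)
    (It : ℝ → ℝ → ℝ)
    (hIt : ∀ x t : ℝ, It x t = χ * (Cm * pdt V x t + Iion x t))
    (hOhme : ∀ x t : ℝ, pdx Ve x t = -Le * pdt Ie x t - Re * Ie x t)
    (hOhmi : ∀ x t : ℝ, pdx Vi x t = -Li * pdt Ii x t - Ri * Ii x t)
    (hKCLe : ∀ x t : ℝ, pdx Ie x t = It x t)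
    (hKCLi : ∀ x t : ℝ, pdx Ii x t = -It x t) :
    ∀ x t : ℝ,
      ((Li + Le) / (Ri + Re)) * Cm * pdt (pdt V) x t + Cm * pdt V x t
        - (1 / (χ * (Ri + Re))) * pdx (pdx V) x t
      = -Iion x t - ((Li + Le) / (Ri + Re)) * pdt Iion x t := by
  intro x t
  obtain rfl : V = Vi - Ve := funext₂ hV
  have hV2 : ContDiff ℝ 2 (uncurry (Vi - Ve)) := hVi.sub hVe
  have hVx : pdx (Vi - Ve) =
      fun y s => (Le * pdt Ie y s + Re * Ie y s) - (Li * pdt Ii y s + Ri * Ii y s) := by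
    funext y s
    rw [pdx_sub (hVi.differentiable two_ne_zero _) (hVe.differentiable two_ne_zero _),
      hOhmi, hOhme]
    ring
  have hVxx : pdx (pdx (Vi - Ve)) x t = (Li + Le) * pdt It x t + (Ri + Re) * It x t :=
    calc pdx (pdx (Vi - Ve)) x t
        = (Le * pdx (pdt Ie) x t + Re * pdx Ie x t)
            - (Li * pdx (pdt Ii) x t + Ri * pdx Ii x t) := by
          rw [hVx]
          exact ((((hasDerivAt_pdx (hIe.uncurry_pdt.differentiable one_ne_zero _)).const_mul Le).add
            ((hasDerivAt_pdx (hIe.differentiable two_ne_zero _)).const_mul Re)).sub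
            (((hasDerivAt_pdx (hIi.uncurry_pdt.differentiable one_ne_zero _)).const_mul Li).add
            ((hasDerivAt_pdx (hIi.differentiable two_ne_zero _)).const_mul Ri))).deriv
      _ = (Li + Le) * pdt It x t + (Ri + Re) * It x t := by
          rw [pdx_pdt_comm hIe, pdx_pdt_comm hIi, hKCLe, hKCLi,
            show pdx Ie = It from funext₂ hKCLe, show pdx Ii = -It from funext₂ hKCLi, pdt_neg]
          ring
  have hItt : pdt It x t = χ * (Cm * pdt (pdt (Vi - Ve)) x t + pdt Iion x t) := by
    rw [pdt, show It x = _ from funext (hIt x)]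
    exact ((((hasDerivAt_pdt (hV2.uncurry_pdt.differentiable one_ne_zero _)).const_mul Cm).add
      (hasDerivAt_pdt (hIion.differentiable two_ne_zero _))).const_mul χ).deriv
  rw [hVxx, hItt, hIt x t]
  field_simp
  ring
end
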